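/- arXiv:2605.16593 — 3 statements merged into one kernel-verified Lean document; each statement's English description precedes it below -/
import Mathlib

section
/- Let f, g : X → ℝ be nonnegative measurable functions of a random variable X with finite second moments, and suppose E[g(X)] ≠ 0. Then P[f(X) ≥ g(X)] ≤ (E[f(X)] + (1/2)·√(Var[g(X)])) / E[g(X)]. -/
/-!
With `A = {f ≥ g}` and `p = P(A)` one has `p · E[g] = E[g · 1_A] - Cov(g, 1_A)`. The first term is
at most `E[f]` because `g ≤ f` on `A` and `f ≥ 0`; the second is at most `σ(g) · σ(1_A)` by
Cauchy–Schwarz, and `σ(1_A) = √(p (1 - p)) ≤ 1/2`.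
-/

open MeasureTheory ProbabilityTheory

namespace ProbabilityTheory

variable {Ω : Type*} [MeasurableSpace Ω] {μ : Measure Ω}

lemma covariance_sq_le_variance_mul [IsFiniteMeasure μ] {X Y : Ω → ℝ}
    (hX : MemLp X 2 μ) (hY : MemLp Y 2 μ) :
    cov[X, Y; μ] ^ 2 ≤ Var[X; μ] * Var[Y; μ] := by
  have hquad : ∀ t : ℝ, 0 ≤ Var[Y; μ] * (t * t) + (-2 * cov[X, Y; μ]) * t + Var[X; μ] := by
    intro t
    have h := variance_nonneg (X - t • Y) μ
    rw [variance_sub hX (hY.const_smul t), covariance_smul_right, variance_smul] at h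
    linarith
  have hdiscrim := discrim_le_zero hquad
  rw [discrim] at hdiscrim
  linarith

lemma abs_covariance_le_sqrt_variance_mul [IsFiniteMeasure μ] {X Y : Ω → ℝ}
    (hX : MemLp X 2 μ) (hY : MemLp Y 2 μ) :
    |cov[X, Y; μ]| ≤ √(Var[X; μ] * Var[Y; μ]) :=
  Real.abs_le_sqrt (covariance_sq_le_variance_mul hX hY)

lemma variance_indicator_one_le [IsProbabilityMeasure μ] {A : Set Ω} (hA : MeasurableSet A) :
    Var[A.indicator 1; μ] ≤ 1 / 4 := by
  have hbound : ∀ ω, A.indicator (1 : Ω → ℝ) ω ∈ Set.Icc 0 1 := fun ω => by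
    by_cases hω : ω ∈ A <;> simp [hω]
  have := variance_le_sq_of_bounded (ae_of_all μ hbound)
    (measurable_const.indicator hA).aemeasurable
  norm_num at this
  exact this

lemma covariance_indicator_one_right [IsProbabilityMeasure μ] {X : Ω → ℝ} (hX : MemLp X 2 μ)
    {A : Set Ω} (hA : MeasurableSet A) :
    cov[X, A.indicator 1; μ] = ∫ ω in A, X ω ∂μ - μ[X] * μ.real A := by
  have h1 : MemLp (A.indicator (1 : Ω → ℝ)) 2 μ := (memLp_const 1).indicator hA
  rw [covariance_eq_sub hX h1, integral_indicator_one hA, ← integral_indicator hA]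
  congr 2
  ext ω
  by_cases hω : ω ∈ A <;> simp [hω]

lemma measureReal_mul_integral_le_setIntegral_add [IsProbabilityMeasure μ] {X : Ω → ℝ}
    (hX : MemLp X 2 μ) {A : Set Ω} (hA : MeasurableSet A) :
    μ.real A * μ[X] ≤ ∫ ω in A, X ω ∂μ + 1 / 2 * √Var[X; μ] := by
  have h1 : MemLp (A.indicator (1 : Ω → ℝ)) 2 μ := (memLp_const 1).indicator hA
  have hcov : |cov[X, A.indicator 1; μ]| ≤ 1 / 2 * √Var[X; μ] :=
    calc |cov[X, A.indicator 1; μ]|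
        ≤ √(Var[X; μ] * Var[A.indicator 1; μ]) := abs_covariance_le_sqrt_variance_mul hX h1
      _ ≤ √(Var[X; μ] * (1 / 2) ^ 2) := by
        gcongr
        · exact variance_nonneg X μ
        · exact (variance_indicator_one_le hA).trans_eq (by norm_num)
      _ = 1 / 2 * √Var[X; μ] := by
        rw [Real.sqrt_mul (variance_nonneg X μ), Real.sqrt_sq (by norm_num), mul_comm]
  rw [covariance_indicator_one_right hX hA] at hcov
  linarith [neg_abs_le (∫ ω in A, X ω ∂μ - μ[X] * μ.real A)]

end ProbabilityTheory

open ProbabilityTheory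

theorem generalized_markov_general
    {Ω : Type*} [MeasurableSpace Ω] (μ : Measure Ω) [IsProbabilityMeasure μ]
    (f g : Ω → ℝ)
    (hf_meas : Measurable f) (hg_meas : Measurable g)
    (hf_nonneg : ∀ ω, 0 ≤ f ω) (hg_nonneg : ∀ ω, 0 ≤ g ω)
    (hf_int : Integrable f μ)
    (hg2_int : Integrable (fun ω => (g ω) ^ 2) μ)
    (hEg : ∫ ω, g ω ∂μ ≠ 0) :
    (μ {ω | f ω ≥ g ω}).toReal ≤
      ((∫ ω, f ω ∂μ) +
        (1 / 2) * Real.sqrt ((∫ ω, (g ω) ^ 2 ∂μ) - (∫ ω, g ω ∂μ) ^ 2)) /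
      (∫ ω, g ω ∂μ) := by
  have hA : MeasurableSet {ω | f ω ≥ g ω} := measurableSet_le hg_meas hf_meas
  have hg : MemLp g 2 μ := (memLp_two_iff_integrable_sq hg_meas.aestronglyMeasurable).2 hg2_int
  have hEg_pos : 0 < ∫ ω, g ω ∂μ := (integral_nonneg hg_nonneg).lt_of_ne' hEg
  have hgA_le : ∫ ω in {ω | f ω ≥ g ω}, g ω ∂μ ≤ ∫ ω, f ω ∂μ :=
    (setIntegral_mono_on (hg.integrable one_le_two).integrableOn hf_int.integrableOn hA
      fun _ hω => hω).trans (setIntegral_le_integral hf_int (ae_of_all _ hf_nonneg))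
  have hvar : Var[g; μ] = ∫ ω, g ω ^ 2 ∂μ - (∫ ω, g ω ∂μ) ^ 2 := variance_eq_sub hg
  have hmain := measureReal_mul_integral_le_setIntegral_add hg hA
  rw [measureReal_def] at hmain
  rw [le_div_iff₀ hEg_pos, ← hvar]
  linarith

/-- Generalized Markov inequality:
`P[f ≥ g] ≤ (E[f] + (1/2)·√(Var g)) / E[g]`. -/
theorem generalized_markov
    {Ω : Type*} [MeasurableSpace Ω] (μ : Measure Ω) [IsProbabilityMeasure μ]
    (f g : Ω → ℝ)
    (hf_meas : Measurable f) (hg_meas : Measurable g)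
    (hf_nonneg : ∀ ω, 0 ≤ f ω) (hg_nonneg : ∀ ω, 0 ≤ g ω)
    (hf_int : Integrable f μ) (hf2_int : Integrable (fun ω => (f ω) ^ 2) μ)
    (hg_int : Integrable g μ) (hg2_int : Integrable (fun ω => (g ω) ^ 2) μ)
    (hEg : ∫ ω, g ω ∂μ ≠ 0) :
    (μ {ω | f ω ≥ g ω}).toReal ≤
      ((∫ ω, f ω ∂μ) +
        (1 / 2) * Real.sqrt ((∫ ω, (g ω) ^ 2 ∂μ) - (∫ ω, g ω ∂μ) ^ 2)) /
      (∫ ω, g ω ∂μ) :=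
  generalized_markov_general μ f g hf_meas hg_meas hf_nonneg hg_nonneg hf_int hg2_int hEg
end

section
/- Let C be a symmetric positive-definite p×p real matrix and n > 0. The function Σ ↦ trace(Σ⁻¹ C) + n·log det(Σ), defined on symmetric positive-definite p×p matrices Σ, attains its unique global minimum at Σ* = n⁻¹·C, with minimum value n·p + n·log det(n⁻¹ C). -/
/-!
With `D = n⁻¹ • C = Bᴴ * B` (`B` invertible) and `A = B * S⁻¹ * Bᴴ`, the objective exceeds its
claimed minimum by `n * (tr A - log det A - p) = n * ∑ᵢ (λᵢ - log λᵢ - 1)`, where the `λᵢ > 0` are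
the eigenvalues of `A`. Since `log x ≤ x - 1` with equality only at `x = 1`, this is nonnegative,
and it vanishes only when `A = 1`, i.e. when `S = D`.
-/

open Matrix
open scoped MatrixOrder

namespace Real

lemma one_le_sub_log {x : ℝ} (hx : 0 < x) : 1 ≤ x - log x := by
  linarith [log_le_sub_one_of_pos hx]

lemma sub_log_eq_one_iff {x : ℝ} (hx : 0 < x) : x - log x = 1 ↔ x = 1 := by
  refine ⟨fun h => ?_, fun h => by simp [h]⟩
  by_contra hx1
  linarith [log_lt_sub_one_of_pos hx hx1]

end Real

namespace Matrix.PosDef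

variable {ι : Type*} [Fintype ι] [DecidableEq ι]

lemma trace_sub_log_det_eq_sum {A : Matrix ι ι ℝ} (hA : A.PosDef) :
    A.trace - Real.log A.det = ∑ i, (hA.1.eigenvalues i - Real.log (hA.1.eigenvalues i)) := by
  rw [hA.1.trace_eq_sum_eigenvalues, hA.1.det_eq_prod_eigenvalues, Finset.sum_sub_distrib]
  simp only [RCLike.ofReal_real_eq_id, id]
  rw [Real.log_prod fun i _ => (hA.eigenvalues_pos i).ne']

lemma card_le_trace_sub_log_det {A : Matrix ι ι ℝ} (hA : A.PosDef) :
    (Fintype.card ι : ℝ) ≤ A.trace - Real.log A.det := by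
  rw [hA.trace_sub_log_det_eq_sum, Fintype.card_eq_sum_ones, Nat.cast_sum, Nat.cast_one]
  exact Finset.sum_le_sum fun i _ => Real.one_le_sub_log (hA.eigenvalues_pos i)

lemma trace_sub_log_det_eq_card_iff {A : Matrix ι ι ℝ} (hA : A.PosDef) :
    A.trace - Real.log A.det = Fintype.card ι ↔ A = 1 := by
  refine ⟨fun h => ?_, fun h => by simp [h]⟩
  rw [hA.trace_sub_log_det_eq_sum, Fintype.card_eq_sum_ones, Nat.cast_sum, Nat.cast_one, eq_comm,
    Finset.sum_eq_sum_iff_of_le fun i _ => Real.one_le_sub_log (hA.eigenvalues_pos i)] at h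
  have heig : hA.1.eigenvalues = 1 := funext fun i =>
    (Real.sub_log_eq_one_iff (hA.eigenvalues_pos i)).1 (h i (Finset.mem_univ i)).symm
  rw [hA.1.spectral_theorem, heig]
  simp

lemma exists_posDef_trace_inv_mul_add_log_det_eq {S D : Matrix ι ι ℝ} (hS : S.PosDef)
    (hD : D.PosDef) :
    ∃ A : Matrix ι ι ℝ, A.PosDef ∧
      (S⁻¹ * D).trace + Real.log S.det = A.trace - Real.log A.det + Real.log D.det ∧
      (A = 1 ↔ S = D) := by
  obtain ⟨B, hB, rfl⟩ := CStarAlgebra.isStrictlyPositive_iff_eq_star_mul_self.mp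
    hD.isStrictlyPositive
  rw [star_eq_conjTranspose]
  have hA : (B * S⁻¹ * Bᴴ).PosDef :=
    hS.inv.mul_mul_conjTranspose_same (vecMul_injective_iff_isUnit.mpr hB)
  refine ⟨B * S⁻¹ * Bᴴ, hA, ?_, ?_⟩
  · have hdet : (B * S⁻¹ * Bᴴ).det * S.det = (Bᴴ * B).det := by
      rw [det_mul, det_mul, det_mul]
      linear_combination (B.det * Bᴴ.det) * det_nonsing_inv_mul_det S hS.det_pos.ne'.isUnit
    have htr : (B * S⁻¹ * Bᴴ).trace = (S⁻¹ * (Bᴴ * B)).trace := by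
      rw [trace_mul_cycle, trace_mul_comm]
    rw [htr, ← hdet, Real.log_mul hA.det_pos.ne' hS.det_pos.ne']
    ring
  · have := hS.isUnit.invertible
    rw [Matrix.mul_assoc, mul_eq_one_comm, Matrix.mul_assoc,
      inv_mul_eq_iff_eq_mul_of_invertible, Matrix.mul_one, eq_comm]

theorem card_add_log_det_le_trace_inv_mul_add_log_det {S D : Matrix ι ι ℝ} (hS : S.PosDef)
    (hD : D.PosDef) : Fintype.card ι + Real.log D.det ≤ (S⁻¹ * D).trace + Real.log S.det := by
  obtain ⟨A, hA, hwhiten, -⟩ := hS.exists_posDef_trace_inv_mul_add_log_det_eq hD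
  linarith [hA.card_le_trace_sub_log_det]

theorem trace_inv_mul_add_log_det_eq_iff {S D : Matrix ι ι ℝ} (hS : S.PosDef) (hD : D.PosDef) :
    (S⁻¹ * D).trace + Real.log S.det = Fintype.card ι + Real.log D.det ↔ S = D := by
  obtain ⟨A, hA, hwhiten, hA_eq_one⟩ := hS.exists_posDef_trace_inv_mul_add_log_det_eq hD
  rw [hwhiten, ← hA_eq_one, ← hA.trace_sub_log_det_eq_card_iff]
  constructor <;> intro h <;> linarith

end Matrix.PosDef

theorem covariance_logdet_min_general (p : ℕ) (n : ℝ) (hn : 0 < n)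
    (C : Matrix (Fin p) (Fin p) ℝ) (hC_pd : C.PosDef) :
    (((n⁻¹ • C)⁻¹ * C).trace + n * Real.log ((n⁻¹ • C).det)
        = n * p + n * Real.log ((n⁻¹ • C).det)) ∧
    ∀ S : Matrix (Fin p) (Fin p) ℝ, S.IsSymm → S.PosDef →
      (n * p + n * Real.log ((n⁻¹ • C).det) ≤ (S⁻¹ * C).trace + n * Real.log S.det ∧
        ((S⁻¹ * C).trace + n * Real.log S.det = n * p + n * Real.log ((n⁻¹ • C).det)
          ↔ S = n⁻¹ • C)) := by
  set D := n⁻¹ • C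
  have hD : D.PosDef := hC_pd.smul (inv_pos.mpr hn)
  have hscale (S : Matrix (Fin p) (Fin p) ℝ) :
      (S⁻¹ * C).trace + n * Real.log S.det = n * ((S⁻¹ * D).trace + Real.log S.det) := by
    rw [Matrix.mul_smul, trace_smul, smul_eq_mul, mul_add, ← mul_assoc, mul_inv_cancel₀ hn.ne',
      one_mul]
  have hmin : n * p + n * Real.log D.det = n * (Fintype.card (Fin p) + Real.log D.det) := by
    rw [Fintype.card_fin, mul_add]
  rw [hmin]
  refine ⟨by rw [hscale, nonsing_inv_mul _ hD.det_pos.ne'.isUnit, trace_one], fun S _ hS => ?_⟩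
  rw [hscale, mul_le_mul_iff_right₀ hn, mul_right_inj' hn.ne']
  exact ⟨hS.card_add_log_det_le_trace_inv_mul_add_log_det hD,
    hS.trace_inv_mul_add_log_det_eq_iff hD⟩

/-- Gaussian covariance MLE optimization: `Σ ↦ trace(Σ⁻¹C) + n·log det Σ` over
symmetric positive-definite matrices attains its unique global minimum at
`Σ* = n⁻¹ • C`, with minimum value `n·p + n·log det(n⁻¹ • C)`. -/
theorem covariance_logdet_min (p : ℕ) (n : ℝ) (hn : 0 < n)
    (C : Matrix (Fin p) (Fin p) ℝ) (hC_symm : C.IsSymm) (hC_pd : C.PosDef) :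
    (((n⁻¹ • C)⁻¹ * C).trace + n * Real.log ((n⁻¹ • C).det)
        = n * p + n * Real.log ((n⁻¹ • C).det)) ∧
    ∀ S : Matrix (Fin p) (Fin p) ℝ, S.IsSymm → S.PosDef →
      (n * p + n * Real.log ((n⁻¹ • C).det) ≤ (S⁻¹ * C).trace + n * Real.log S.det ∧
        ((S⁻¹ * C).trace + n * Real.log S.det = n * p + n * Real.log ((n⁻¹ • C).det)
          ↔ S = n⁻¹ • C)) :=
  covariance_logdet_min_general p n hn C hC_pd
end

section
/- Consider the weighted K-means objective d(z, μ, Σ) = Σ_{g∈G} Σ_{i : z(i)=g} [(xᵢ − μ_g)ᵀ Σ_g⁻¹ (xᵢ − μ_g) + log det(Σ_g)]. Fix an assignment z and suppose each group g has N_g = #{i : z(i)=g} ≥ 1 points, with updated centroid μ_g' = (1/N_g)·Σ_{z(i)=g} xᵢ and updated covariance Σ_g' = (1/N_g)·Σ_{z(i)=g} (xᵢ − μ_g')(xᵢ − μ_g')ᵀ. If every Σ_g' is positive-definite, then d(z, μ', Σ') ≤ d(z, μ, Σ) for any initial (μ, Σ) with each Σ_g positive-definite. -/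
/-!
Within a group with sample mean `x̄` and sample covariance `Σ'`, the objective is
`∑ᵢ (xᵢ - μ)ᵀ Σ⁻¹ (xᵢ - μ) + N_g log det Σ`. Moving `μ` to `x̄` can only decrease the first sum
(the cross terms of the parallel-axis expansion vanish), and at `μ = x̄` that sum equals
`N_g tr (Σ⁻¹ Σ')`. It remains to see `p + log det Σ' ≤ tr (Σ⁻¹ Σ') + log det Σ`: writing
`Σ' = Rᴴ R`, this is `log det M ≤ tr M - p` for the positive-definite `M = R Σ⁻¹ Rᴴ`, i.e.
`log λ ≤ λ - 1` for each of its eigenvalues.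
-/

open Matrix Finset

theorem Finset.card_smul_inv_card_smul_sum {ι K M : Type*} [DivisionSemiring K] [CharZero K]
    [AddCommMonoid M] [Module K M] (s : Finset ι) (f : ι → M) :
    (#s : K) • ((#s : K)⁻¹ • ∑ i ∈ s, f i) = ∑ i ∈ s, f i := by
  obtain rfl | hs := s.eq_empty_or_nonempty
  · simp
  · exact smul_inv_smul₀ (mod_cast hs.card_ne_zero) _

namespace Matrix

variable {n : Type*} [Fintype n]

theorem dotProduct_mulVec_self_eq_trace_mul_vecMulVec {R : Type*} [CommSemiring R]
    (C : Matrix n n R) (v : n → R) :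
    v ⬝ᵥ C *ᵥ v = (C * vecMulVec v v).trace := by
  rw [mul_vecMulVec, trace_vecMulVec, dotProduct_comm]

theorem sum_dotProduct_mulVec_self_eq_trace {ι R : Type*} [CommSemiring R] (s : Finset ι)
    (C : Matrix n n R) (v : ι → n → R) :
    ∑ i ∈ s, v i ⬝ᵥ C *ᵥ v i = (C * ∑ i ∈ s, vecMulVec (v i) (v i)).trace := by
  simp only [dotProduct_mulVec_self_eq_trace_mul_vecMulVec, mul_sum, trace_sum]

theorem sum_dotProduct_mulVec_sub_eq_of_sum_sub_eq_zero {ι R : Type*} [CommRing R]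
    (s : Finset ι) (C : Matrix n n R) (x : ι → n → R) (c m : n → R)
    (hc : ∑ i ∈ s, (x i - c) = 0) :
    ∑ i ∈ s, (x i - m) ⬝ᵥ C *ᵥ (x i - m)
      = ∑ i ∈ s, (x i - c) ⬝ᵥ C *ᵥ (x i - c) + #s • ((c - m) ⬝ᵥ C *ᵥ (c - m)) := by
  have hsplit : ∀ i, (x i - m) ⬝ᵥ C *ᵥ (x i - m) = (x i - c) ⬝ᵥ C *ᵥ (x i - c)
      + ((x i - c) ⬝ᵥ C *ᵥ (c - m) + (c - m) ⬝ᵥ C *ᵥ (x i - c)) + (c - m) ⬝ᵥ C *ᵥ (c - m) := by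
    intro i
    rw [← sub_add_sub_cancel (x i) c m, mulVec_add, dotProduct_add, add_dotProduct,
      add_dotProduct]
    ring
  simp only [hsplit, sum_add_distrib, sum_const, ← sum_dotProduct, ← mulVec_sum, ← dotProduct_sum,
    hc, zero_dotProduct, mulVec_zero, dotProduct_zero, add_zero]

variable [DecidableEq n]

theorem PosDef.log_det_le_trace_sub_card {M : Matrix n n ℝ} (hM : M.PosDef) :
    Real.log M.det ≤ M.trace - Fintype.card n := by
  rw [hM.isHermitian.det_eq_prod_eigenvalues, hM.isHermitian.trace_eq_sum_eigenvalues]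
  simp only [RCLike.ofReal_real_eq_id, id]
  rw [Real.log_prod fun i _ => (hM.eigenvalues_pos i).ne', Fintype.card_eq_sum_ones,
    Nat.cast_sum, Nat.cast_one, ← sum_sub_distrib]
  exact sum_le_sum fun i _ => Real.log_le_sub_one_of_pos (hM.eigenvalues_pos i)

open scoped MatrixOrder in
theorem PosDef.card_add_log_det_le_trace_inv_mul_add_log_det_s12 {A B : Matrix n n ℝ}
    (hA : A.PosDef) (hB : B.PosDef) :
    Fintype.card n + Real.log B.det ≤ (A⁻¹ * B).trace + Real.log A.det := by
  obtain ⟨R, rfl⟩ := CStarAlgebra.nonneg_iff_eq_star_mul_self.mp hB.posSemidef.nonneg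
  rw [star_eq_conjTranspose] at hB ⊢
  have hR : IsUnit R.det := by
    have hdet := hB.det_pos.ne'
    rw [det_mul, det_conjTranspose] at hdet
    exact isUnit_iff_ne_zero.2 (right_ne_zero_of_mul hdet)
  have hM : (R * A⁻¹ * Rᴴ).PosDef :=
    hA.inv.mul_mul_conjTranspose_same
      (vecMul_injective_iff_isUnit.2 ((isUnit_iff_isUnit_det R).2 hR))
  have htrace : (R * A⁻¹ * Rᴴ).trace = (A⁻¹ * (Rᴴ * R)).trace := by
    rw [trace_mul_cycle, trace_mul_comm]
  have hdet : (R * A⁻¹ * Rᴴ).det = (Rᴴ * R).det / A.det := by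
    rw [det_mul, det_mul, det_mul, det_nonsing_inv, Ring.inverse_eq_inv', div_eq_mul_inv]
    ring
  have hlogdet := hM.log_det_le_trace_sub_card
  rw [htrace, hdet, Real.log_div hB.det_pos.ne' hA.det_pos.ne'] at hlogdet
  linarith

end Matrix

theorem sum_mahalanobis_add_log_det_sample_le {ι n : Type*} [Fintype n] [DecidableEq n]
    (s : Finset ι) (x : ι → n → ℝ) (m c : n → ℝ) {S S' : Matrix n n ℝ}
    (hS : S.PosDef) (hS' : S'.PosDef)
    (hc : c = (#s : ℝ)⁻¹ • ∑ i ∈ s, x i)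
    (hS'_eq : S' = (#s : ℝ)⁻¹ • ∑ i ∈ s, vecMulVec (x i - c) (x i - c)) :
    ∑ i ∈ s, ((x i - c) ⬝ᵥ S'⁻¹ *ᵥ (x i - c) + Real.log S'.det)
      ≤ ∑ i ∈ s, ((x i - m) ⬝ᵥ S⁻¹ *ᵥ (x i - m) + Real.log S.det) := by
  have hcentered : ∑ i ∈ s, (x i - c) = 0 := by
    rw [sum_sub_distrib, sum_const, hc, ← Nat.cast_smul_eq_nsmul ℝ,
      card_smul_inv_card_smul_sum, sub_self]
  have hscatter : ∑ i ∈ s, vecMulVec (x i - c) (x i - c) = (#s : ℝ) • S' := by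
    rw [hS'_eq, card_smul_inv_card_smul_sum]
  have hquad : ∀ C, ∑ i ∈ s, (x i - c) ⬝ᵥ C *ᵥ (x i - c) = #s * (C * S').trace := fun C => by
    rw [sum_dotProduct_mulVec_self_eq_trace, hscatter, Matrix.mul_smul, trace_smul, smul_eq_mul]
  have hshift : 0 ≤ (c - m) ⬝ᵥ S⁻¹ *ᵥ (c - m) := by
    simpa only [star_trivial] using hS.inv.posSemidef.dotProduct_mulVec_nonneg (c - m)
  simp only [sum_add_distrib, sum_const, nsmul_eq_mul]
  calc _ = (#s : ℝ) * (Fintype.card n + Real.log S'.det) := by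
        rw [hquad, nonsing_inv_mul _ hS'.det_pos.ne'.isUnit, trace_one]
        ring
    _ ≤ #s * ((S⁻¹ * S').trace + Real.log S.det) :=
        mul_le_mul_of_nonneg_left
          (hS.card_add_log_det_le_trace_inv_mul_add_log_det_s12 hS') (Nat.cast_nonneg _)
    _ = ∑ i ∈ s, (x i - c) ⬝ᵥ S⁻¹ *ᵥ (x i - c) + #s * Real.log S.det := by
        rw [hquad]
        ring
    _ ≤ ∑ i ∈ s, (x i - m) ⬝ᵥ S⁻¹ *ᵥ (x i - m) + #s * Real.log S.det := by
        rw [sum_dotProduct_mulVec_sub_eq_of_sum_sub_eq_zero s _ x c m hcentered]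
        exact add_le_add_left (le_add_of_nonneg_right (nsmul_nonneg hshift _)) _

theorem estimation_step_monotone_general
    (p N : ℕ) {G : Type*} [Fintype G] [DecidableEq G]
    (x : Fin N → Fin p → ℝ) (z : Fin N → G)
    (μ μ' : G → Fin p → ℝ) (Sg Sg' : G → Matrix (Fin p) (Fin p) ℝ)
    (hPd : ∀ g, (Sg g).PosDef)
    (Ng : G → ℕ) (hNg : ∀ g, Ng g = (univ.filter fun i => z i = g).card)
    (hμ' : ∀ g, μ' g = (Ng g : ℝ)⁻¹ • ∑ i ∈ univ.filter (fun i => z i = g), x i)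
    (hSg' : ∀ g, Sg' g = (Ng g : ℝ)⁻¹ •
        ∑ i ∈ univ.filter (fun i => z i = g),
          vecMulVec (x i - μ' g) (x i - μ' g))
    (hPd' : ∀ g, (Sg' g).PosDef) :
    ∑ i, ((x i - μ' (z i)) ⬝ᵥ (Sg' (z i))⁻¹ *ᵥ (x i - μ' (z i))
        + Real.log (Sg' (z i)).det)
      ≤ ∑ i, ((x i - μ (z i)) ⬝ᵥ (Sg (z i))⁻¹ *ᵥ (x i - μ (z i))
        + Real.log (Sg (z i)).det) := by
  simp only [hNg] at hμ' hSg'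
  rw [← sum_fiberwise univ z, ← sum_fiberwise univ z]
  refine sum_le_sum fun g _ => ?_
  have hgroup := sum_mahalanobis_add_log_det_sample_le _ x (μ g) (μ' g) (hPd g) (hPd' g)
    (hμ' g) (hSg' g)
  have hz : ∀ i ∈ univ.filter (fun i => z i = g), z i = g := fun i hi => (mem_filter.1 hi).2
  refine (sum_congr rfl fun i hi => ?_).trans_le (hgroup.trans_eq (sum_congr rfl fun i hi => ?_))
    <;> rw [hz i hi]

/-- Estimation-step monotonicity (Lemma 1) of the weighted K-means algorithm:
updating each group's mean to the group sample mean and each covariance to the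
group sample covariance never increases the total penalized squared
Mahalanobis distance, provided the updated covariances are positive-definite. -/
theorem estimation_step_monotone
    (p N : ℕ) {G : Type*} [Fintype G] [DecidableEq G]
    (x : Fin N → Fin p → ℝ) (z : Fin N → G)
    (μ μ' : G → Fin p → ℝ) (Sg Sg' : G → Matrix (Fin p) (Fin p) ℝ)
    (hSymm : ∀ g, (Sg g).IsSymm) (hPd : ∀ g, (Sg g).PosDef)
    (Ng : G → ℕ) (hNg : ∀ g, Ng g = (univ.filter fun i => z i = g).card)
    (hNg_pos : ∀ g, 1 ≤ Ng g)
    (hμ' : ∀ g, μ' g = (Ng g : ℝ)⁻¹ • ∑ i ∈ univ.filter (fun i => z i = g), x i)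
    (hSg' : ∀ g, Sg' g = (Ng g : ℝ)⁻¹ •
        ∑ i ∈ univ.filter (fun i => z i = g),
          vecMulVec (x i - μ' g) (x i - μ' g))
    (hPd' : ∀ g, (Sg' g).PosDef) :
    ∑ i, ((x i - μ' (z i)) ⬝ᵥ (Sg' (z i))⁻¹ *ᵥ (x i - μ' (z i))
        + Real.log (Sg' (z i)).det)
      ≤ ∑ i, ((x i - μ (z i)) ⬝ᵥ (Sg (z i))⁻¹ *ᵥ (x i - μ (z i))
        + Real.log (Sg (z i)).det) :=
  estimation_step_monotone_general p N x z μ μ' Sg Sg' hPd Ng hNg hμ' hSg' hPd'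
end
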